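/- arXiv:1907.12790 — 3 statements merged into one kernel-verified Lean document; each statement's English description precedes it below -/
import Mathlib

section
/- Let v be a vertex set of n ≥ 2 cyclically ordered points, and let A_{k,n} denote the number of partitions of {1,...,n} into exactly k nonempty blocks such that no block contains two cyclically consecutive integers (where n and 1 are consecutive). Then for every prime power q, q(q+1) · Σ_{k=2}^{n} A_{k,n} · Π_{j=1}^{k-2}(q-j) = q^n + (-1)^n q. -/
open Finset

/-- The cyclic successor of `i : Fin n`. -/
def cycSucc {n : ℕ} (i : Fin n) : Fin n := ⟨(i.1 + 1) % n, Nat.mod_lt _ i.pos⟩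

/-- `cyclicPartitionCount k n` is the number `A_{k,n}` of partitions of the cyclically
ordered set `{1,…,n}` into exactly `k` nonempty blocks such that no block contains two
cyclically consecutive elements. -/
noncomputable def cyclicPartitionCount (k n : ℕ) : ℕ :=
  Nat.card {P : Finpartition (Finset.univ : Finset (Fin n)) //
    P.parts.card = k ∧ ∀ b ∈ P.parts, ∀ i : Fin n, i ∈ b → cycSucc i ∉ b}

/-!
Both sides count the proper colourings of the `n`-cycle with `q + 1` colours.

Sorting a colouring by its partition into colour classes, which must separate cyclic neighbours,
gives `∑ₖ A_{k,n} (q + 1) q (q - 1) ⋯ (q - k + 2)`, the left-hand side.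

Taking the colours in `ZMod (q + 1)`, a colouring of `Fin (m + 1)` is its value at `0` together
with its `m` successive differences, which must be nonzero with nonzero sum (the closing
difference). If `C m` counts such difference sequences, the sequences of length `m + 1` whose
sum vanishes correspond to those counted by `C m`, so `C (m + 1) + C m = q ^ (m + 1)`, and
`(q + 1) C m = q ^ (m + 1) + (-1) ^ (m + 1) q`.
-/

namespace Finpartition

variable {α X : Type*} [Fintype α] [DecidableEq α]

def label (P : Finpartition (univ : Finset α)) (e : P.parts ↪ X) (a : α) : X :=
  e ⟨P.part a, P.part_mem.2 (mem_univ a)⟩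

def Separates (σ : α → α) (P : Finpartition (univ : Finset α)) : Prop :=
  ∀ t ∈ P.parts, ∀ a ∈ t, σ a ∉ t

instance (σ : α → α) : DecidablePred (Separates σ) := fun P => by
  unfold Separates; infer_instance

variable {P : Finpartition (univ : Finset α)} (e : P.parts ↪ X)

lemma label_eq_label_iff {a b : α} : P.label e a = P.label e b ↔ P.part a = P.part b := by
  simp [label, e.injective.eq_iff]

lemma mem_parts_iff_exists_part_eq {t : Finset α} : t ∈ P.parts ↔ ∃ a, P.part a = t := by
  refine ⟨fun ht => ?_, fun ⟨a, ha⟩ => ha ▸ P.part_mem.2 (mem_univ a)⟩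
  obtain ⟨a, ha⟩ := P.nonempty_of_mem_parts ht
  exact ⟨a, P.part_eq_of_mem ht ha⟩

lemma ext_part {Q : Finpartition (univ : Finset α)} (h : ∀ a, P.part a = Q.part a) : P = Q := by
  ext t
  simp only [mem_parts_iff_exists_part_eq, h]

theorem label_bijective :
    Function.Bijective fun p : Σ P : Finpartition (univ : Finset α), P.parts ↪ X =>
      p.1.label p.2 := by
  constructor
  · rintro ⟨P, e⟩ ⟨Q, e'⟩ (h : P.label e = Q.label e')
    have hpart (a : α) : P.part a = Q.part a := by
      ext b
      rw [P.mem_part_iff_part_eq_part (mem_univ b) (mem_univ a),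
        Q.mem_part_iff_part_eq_part (mem_univ b) (mem_univ a), ← label_eq_label_iff e,
        ← label_eq_label_iff e', h]
    obtain rfl := ext_part hpart
    congr
    ext ⟨t, ht⟩
    obtain ⟨a, rfl⟩ := mem_parts_iff_exists_part_eq.1 ht
    exact congrFun h a
  · intro f
    classical
    set P := ofSetoid (Setoid.ker f)
    have mem_part (a b : α) : b ∈ P.part a ↔ f a = f b := mem_part_ofSetoid_iff_rel
    let rep (t : P.parts) : α := (P.nonempty_of_mem_parts t.2).choose
    have rep_mem (t : P.parts) : rep t ∈ t.1 := (P.nonempty_of_mem_parts t.2).choose_spec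
    refine ⟨⟨P, ⟨f ∘ rep, fun t t' h => Subtype.ext ?_⟩⟩, funext fun a => ?_⟩
    · rw [← P.part_eq_of_mem t.2 (rep_mem t), ← P.part_eq_of_mem t'.2 (rep_mem t')]
      exact P.part_eq_of_mem (P.part_mem.2 (mem_univ _)) ((mem_part _ _).2 h.symm)
    · exact ((mem_part a _).1 (rep_mem ⟨P.part a, P.part_mem.2 (mem_univ a)⟩)).symm

lemma forall_label_ne_iff (σ : α → α) :
    (∀ a, P.label e a ≠ P.label e (σ a)) ↔ P.Separates σ := by
  simp only [Separates, ne_eq, label_eq_label_iff]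
  refine ⟨fun h t ht a hat hσ => h a ?_, fun h a hpart => ?_⟩
  · rw [P.part_eq_of_mem ht hat, P.part_eq_of_mem ht hσ]
  · exact h _ (P.part_mem.2 (mem_univ a)) a (P.mem_part (mem_univ a))
      (hpart ▸ P.mem_part (mem_univ _))

theorem card_forall_ne_comp_eq_sum [Finite X] (σ : α → α) :
    Nat.card {f : α → X // ∀ a, f a ≠ f (σ a)} =
      ∑ P : Finpartition (univ : Finset α) with P.Separates σ,
        (Nat.card X).descFactorial #P.parts := by
  have := Fintype.ofFinite X
  rw [← Nat.card_congr ((Equiv.ofBijective _ label_bijective).subtypeEquiv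
      fun p => (forall_label_ne_iff p.2 σ).symm),
    Nat.card_eq_fintype_card, Fintype.card_subtype]
  have : univ.filter (fun p : Σ P : Finpartition (univ : Finset α), P.parts ↪ X =>
      p.1.Separates σ) = (univ.filter (Separates σ)).sigma fun _ => univ := by
    ext; simp
  simp [this, Fintype.card_embedding_eq, Nat.card_eq_fintype_card]

end Finpartition

@[simp]
lemma cycSucc_castSucc {m : ℕ} (i : Fin m) : cycSucc i.castSucc = i.succ := by
  ext; simp [cycSucc, Nat.mod_eq_of_lt (Nat.succ_lt_succ i.2)]

@[simp]
lemma cycSucc_last (m : ℕ) : cycSucc (Fin.last m) = 0 := by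
  ext; simp [cycSucc]

lemma forall_cycSucc_iff {m : ℕ} {p : Fin (m + 1) → Fin (m + 1) → Prop} :
    (∀ i, p i (cycSucc i)) ↔ (∀ i : Fin m, p i.castSucc i.succ) ∧ p (Fin.last m) 0 := by
  simp [Fin.forall_fin_succ', and_comm]

section CyclicColorings

variable {G : Type*} [AddCommGroup G]

def Fin.diffEquiv (m : ℕ) : (Fin (m + 1) → G) ≃ (Fin m → G) × G where
  toFun f := (fun i => f i.succ - f i.castSucc, f 0)
  invFun p := p.2 +ᵥ Fin.partialSum p.1
  left_inv f := by simpa [sub_eq_neg_add] using Fin.partialSum_left_neg f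
  right_inv p := by
    ext i
    · simpa [sub_eq_neg_add] using Fin.partialSum_right_neg p.1 i
    · simp

lemma Fin.sum_succ_sub_castSucc {m : ℕ} (f : Fin (m + 1) → G) :
    ∑ i : Fin m, (f i.succ - f i.castSucc) = f (Fin.last m) - f 0 := by
  induction m with
  | zero => simp
  | succ m ih =>
    simp only [Fin.sum_univ_castSucc, Fin.succ_castSucc]
    rw [ih (fun i => f i.castSucc), Fin.succ_last, Fin.castSucc_zero]
    abel

lemma forall_ne_cycSucc_iff {m : ℕ} (f : Fin (m + 1) → G) :
    (∀ i, f i ≠ f (cycSucc i)) ↔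
      (∀ i, (Fin.diffEquiv m f).1 i ≠ 0) ∧ ∑ i, (Fin.diffEquiv m f).1 i ≠ 0 := by
  rw [forall_cycSucc_iff (p := fun i j => f i ≠ f j)]
  simp only [Fin.diffEquiv, Equiv.coe_fn_mk, Fin.sum_succ_sub_castSucc, sub_ne_zero]
  exact and_congr_left' (forall_congr' fun _ => ne_comm)

lemma card_cyclicColoring_eq_mul (m : ℕ) :
    Nat.card {f : Fin (m + 1) → G // ∀ i, f i ≠ f (cycSucc i)} =
      Nat.card {h : Fin m → G // (∀ i, h i ≠ 0) ∧ ∑ i, h i ≠ 0} * Nat.card G := by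
  rw [Nat.card_congr ((Fin.diffEquiv m).subtypeEquiv
      (q := fun p => (∀ i, p.1 i ≠ 0) ∧ ∑ i, p.1 i ≠ 0) forall_ne_cycSucc_iff),
    Nat.card_congr (Equiv.prodSubtypeFstEquivSubtypeProd (β := G)
      (p := fun h : Fin m → G => (∀ i, h i ≠ 0) ∧ ∑ i, h i ≠ 0)), Nat.card_prod]

def consNegSumEquiv (m : ℕ) :
    {h : Fin (m + 1) → G // (∀ i, h i ≠ 0) ∧ ∑ i, h i = 0} ≃
      {h : Fin m → G // (∀ i, h i ≠ 0) ∧ ∑ i, h i ≠ 0} where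
  toFun h := ⟨Fin.tail h.1, fun i => h.2.1 i.succ, fun hs => h.2.1 0 <| by
    have h0 : h.1 0 + ∑ i, Fin.tail h.1 i = 0 := (Fin.sum_univ_succ h.1).symm.trans h.2.2
    rwa [hs, add_zero] at h0⟩
  invFun h := ⟨Fin.cons (-∑ i, h.1 i) h.1, Fin.cases (neg_ne_zero.2 h.2.2) h.2.1, by
    simp [Fin.sum_univ_succ]⟩
  left_inv h := by
    have h0 : -∑ i, Fin.tail h.1 i = h.1 0 :=
      neg_eq_of_add_eq_zero_left ((Fin.sum_univ_succ h.1).symm.trans h.2.2)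
    ext1
    simp only [h0, Fin.cons_self_tail]
  right_inv h := by simp

variable [Finite G]

lemma card_forall_ne_zero (m : ℕ) :
    Nat.card {h : Fin m → G // ∀ i, h i ≠ 0} = (Nat.card G - 1) ^ m := by
  have := Fintype.ofFinite G
  classical
  rw [Nat.card_congr (Equiv.subtypePiEquivPi (β := fun _ => G) (p := fun _ g => g ≠ 0)),
    Nat.card_pi]
  simp

lemma card_sum_ne_zero_succ_add (m : ℕ) :
    Nat.card {h : Fin (m + 1) → G // (∀ i, h i ≠ 0) ∧ ∑ i, h i ≠ 0} +
      Nat.card {h : Fin m → G // (∀ i, h i ≠ 0) ∧ ∑ i, h i ≠ 0} =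
        (Nat.card G - 1) ^ (m + 1) := by
  have := Fintype.ofFinite G
  classical
  rw [← Nat.card_congr (consNegSumEquiv m), ← card_forall_ne_zero]
  simp only [Nat.card_eq_fintype_card, Fintype.card_subtype, ← filter_filter]
  rw [add_comm]
  exact card_filter_add_card_filter_not _

theorem card_cyclicColoring (m : ℕ) :
    (Nat.card {f : Fin (m + 1) → G // ∀ i, f i ≠ f (cycSucc i)} : ℤ) =
      ((Nat.card G : ℤ) - 1) ^ (m + 1) + (-1) ^ (m + 1) * ((Nat.card G : ℤ) - 1) := by
  rw [card_cyclicColoring_eq_mul, Nat.cast_mul]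
  induction m with
  | zero => simp
  | succ m ih =>
    have hG : 1 ≤ Nat.card G := Nat.card_pos
    have hrec := congrArg (Nat.cast : ℕ → ℤ) (card_sum_ne_zero_succ_add (G := G) m)
    push_cast [Nat.cast_sub hG] at hrec
    linear_combination (Nat.card G : ℤ) * hrec - ih

end CyclicColorings

lemma Nat.cast_descFactorial_add_two (q m : ℕ) :
    ((q + 1).descFactorial (m + 2) : ℤ) = (q + 1) * q * ∏ j ∈ Icc 1 m, ((q : ℤ) - j) := by
  rw [← descPochhammer_eval_eq_descFactorial, descPochhammer_eval_eq_prod_range,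
    prod_range_succ', prod_range_succ', ← Finset.Ico_add_one_right_eq_Icc, prod_Ico_eq_prod_range]
  push_cast
  ring_nf

section CyclicPartitions

variable {n : ℕ}

lemma two_le_card_parts_of_separates_cycSucc (hn : 2 ≤ n)
    {P : Finpartition (univ : Finset (Fin n))} (hP : P.Separates cycSucc) : 2 ≤ #P.parts := by
  have : NeZero n := ⟨by omega⟩
  have h0 := P.part_mem.2 (mem_univ 0)
  refine one_lt_card.2 ⟨_, h0, _, P.part_mem.2 (mem_univ (cycSucc 0)), fun h => ?_⟩
  exact hP _ h0 0 (P.mem_part (mem_univ _)) (h ▸ P.mem_part (mem_univ _))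

lemma cyclicPartitionCount_eq_card (k : ℕ) :
    cyclicPartitionCount k n =
      #{P : Finpartition (univ : Finset (Fin n)) | P.Separates cycSucc ∧ #P.parts = k} := by
  rw [cyclicPartitionCount, ← Fintype.card_subtype, ← Nat.card_eq_fintype_card]
  exact Nat.card_congr (Equiv.subtypeEquivRight fun _ => and_comm)

theorem card_cyclicColoring_eq_sum {X : Type*} [Finite X] (hn : 2 ≤ n) :
    Nat.card {f : Fin n → X // ∀ i, f i ≠ f (cycSucc i)} =
      ∑ k ∈ Icc 2 n, cyclicPartitionCount k n * (Nat.card X).descFactorial k := by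
  rw [Finpartition.card_forall_ne_comp_eq_sum,
    ← sum_fiberwise_of_maps_to (g := fun P => #P.parts) (t := Icc 2 n) fun P hP =>
      mem_Icc.2 ⟨two_le_card_parts_of_separates_cycSucc hn (mem_filter.1 hP).2,
        P.card_parts_le_card.trans_eq (card_fin n)⟩]
  refine sum_congr rfl fun k _ => ?_
  rw [sum_congr rfl fun P hP => by rw [(mem_filter.1 hP).2], sum_const, smul_eq_mul,
    cyclicPartitionCount_eq_card, filter_filter]

end CyclicPartitions

theorem sum_cyclicPartitionCount_eq_general (n : ℕ) (hn : 2 ≤ n) (q : ℕ) :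
    (q : ℤ) * (q + 1) *
        ∑ k ∈ Icc 2 n, (cyclicPartitionCount k n : ℤ) * ∏ j ∈ Icc 1 (k - 2), ((q : ℤ) - j) =
      (q : ℤ) ^ n + (-1) ^ n * q := by
  obtain ⟨m, rfl⟩ : ∃ m, n = m + 1 := ⟨n - 1, by omega⟩
  have hcount := card_cyclicColoring (G := ZMod (q + 1)) m
  rw [card_cyclicColoring_eq_sum hn, Nat.card_zmod] at hcount
  calc (q : ℤ) * (q + 1) *
        ∑ k ∈ Icc 2 (m + 1), (cyclicPartitionCount k (m + 1) : ℤ) *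
          ∏ j ∈ Icc 1 (k - 2), ((q : ℤ) - j)
      = ∑ k ∈ Icc 2 (m + 1), (cyclicPartitionCount k (m + 1) : ℤ) *
          ((q + 1).descFactorial k : ℤ) := by
        rw [mul_sum]
        refine sum_congr rfl fun k hk => ?_
        obtain ⟨j, rfl⟩ := Nat.exists_eq_add_of_le' (mem_Icc.1 hk).1
        rw [Nat.cast_descFactorial_add_two, Nat.add_sub_cancel]
        ring
    _ = (q : ℤ) ^ (m + 1) + (-1) ^ (m + 1) * q := by
        exact_mod_cast hcount.trans (by push_cast; ring)

theorem sum_cyclicPartitionCount_eq (n : ℕ) (hn : 2 ≤ n) (q : ℕ) (hq : IsPrimePow q) :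
    (q : ℤ) * (q + 1) *
        ∑ k ∈ Icc 2 n, (cyclicPartitionCount k n : ℤ) * ∏ j ∈ Icc 1 (k - 2), ((q : ℤ) - j) =
      (q : ℤ) ^ n + (-1) ^ n * q :=
  sum_cyclicPartitionCount_eq_general n hn q
end

section
/- Let n be even and K a field. If (a_1,...,a_n) ∈ K^n satisfies M(a_n)···M(a_1) = -Id with M(a)=[[a,-1],[1,0]], then for every λ ∈ K^×, the rescaled tuple (λa_1, λ^{-1}a_2, λa_3, λ^{-1}a_4, ..., λa_{n-1}, λ^{-1}a_n) also satisfies M(λ^{-1}a_n)···M(λa_1) = -Id. -/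
/-- The matrix `M(a) = [[a, -1], [1, 0]]`. -/
def friezeMat {K : Type*} [Field K] (a : K) : Matrix (Fin 2) (Fin 2) K :=
  !![a, -1; 1, 0]

/-- The product `M(aₙ) ⋯ M(a₂) M(a₁)`. -/
def friezeProd {K : Type*} [Field K] {n : ℕ} (a : Fin n → K) : Matrix (Fin 2) (Fin 2) K :=
  ((List.ofFn fun i => friezeMat (a i)).reverse).prod

lemma friezeProd_succ {K : Type*} [Field K] {n : ℕ} (a : Fin (n + 1) → K) :
    friezeProd a = friezeMat (a (Fin.last n)) * friezeProd (a ∘ Fin.castSucc) := by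
  unfold friezeProd
  rw [List.ofFn_succ' (fun i => friezeMat (a i)), List.concat_eq_append,
    List.reverse_append, List.reverse_singleton, List.singleton_append, List.prod_cons]
  rfl

lemma frieze_pair {K : Type*} [Field K] (lam : Kˣ) (x y : K) :
    friezeMat ((lam : K)⁻¹ * y) * friezeMat ((lam : K) * x) =
      !![(lam : K)⁻¹, 0; 0, 1] * (friezeMat y * friezeMat x) * !![(lam : K), 0; 0, 1] := by
  ext i j
  fin_cases i <;> fin_cases j <;>
    (simp [friezeMat, Matrix.mul_apply, Fin.sum_univ_two, mul_comm]; try field_simp; try ring)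

lemma frieze_DDinv {K : Type*} [Field K] (lam : Kˣ) :
    !![(lam : K), 0; 0, 1] * !![(lam : K)⁻¹, 0; 0, 1] = 1 := by
  ext i j
  fin_cases i <;> fin_cases j <;>
    simp [Matrix.mul_apply, Fin.sum_univ_two, mul_inv_cancel₀ lam.ne_zero]

lemma frieze_DinvD {K : Type*} [Field K] (lam : Kˣ) :
    !![(lam : K)⁻¹, 0; 0, 1] * !![(lam : K), 0; 0, 1] = 1 := by
  ext i j
  fin_cases i <;> fin_cases j <;>
    simp [Matrix.mul_apply, Fin.sum_univ_two, inv_mul_cancel₀ lam.ne_zero]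

lemma frieze_conj_step {K : Type*} [Field K] (lam : Kˣ) (m : ℕ)
    (ih : ∀ a : Fin (2 * m) → K,
      friezeProd (fun j => (if (j : ℕ) % 2 = 0 then (lam : K) else (lam : K)⁻¹) * a j) =
        !![(lam : K)⁻¹, 0; 0, 1] * friezeProd a * !![(lam : K), 0; 0, 1])
    (a : Fin (2 * m + 1 + 1) → K) :
    friezeProd (fun j => (if (j : ℕ) % 2 = 0 then (lam : K) else (lam : K)⁻¹) * a j) =
      !![(lam : K)⁻¹, 0; 0, 1] * friezeProd a * !![(lam : K), 0; 0, 1] := by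
  set b : Fin (2 * m + 1 + 1) → K :=
    fun j => (if (j : ℕ) % 2 = 0 then (lam : K) else (lam : K)⁻¹) * a j with hb
  set a₂ : Fin (2 * m) → K := fun j => a j.castSucc.castSucc with ha₂
  have key : friezeProd b =
      friezeMat (b (Fin.last (2 * m + 1))) *
        (friezeMat ((b ∘ Fin.castSucc) (Fin.last (2 * m))) *
          friezeProd ((b ∘ Fin.castSucc) ∘ Fin.castSucc)) := by
    rw [friezeProd_succ b, friezeProd_succ (b ∘ Fin.castSucc)]
  have keya : friezeProd a =
      friezeMat (a (Fin.last (2 * m + 1))) *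
        (friezeMat ((a ∘ Fin.castSucc) (Fin.last (2 * m))) * friezeProd a₂) := by
    rw [friezeProd_succ a, friezeProd_succ (a ∘ Fin.castSucc)]
    rfl
  have hv1 : b (Fin.last (2 * m + 1)) = (lam : K)⁻¹ * a (Fin.last (2 * m + 1)) := by
    simp [hb, Fin.last, Nat.add_mod, Nat.mul_mod_right]
  have hv2 : (b ∘ Fin.castSucc) (Fin.last (2 * m)) =
      (lam : K) * (a ∘ Fin.castSucc) (Fin.last (2 * m)) := by
    simp [hb, Fin.last, Nat.mul_mod_right]
  have hrest : ((b ∘ Fin.castSucc) ∘ Fin.castSucc) =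
      fun j : Fin (2 * m) => (if (j : ℕ) % 2 = 0 then (lam : K) else (lam : K)⁻¹) * a₂ j := by
    funext j
    simp [hb, ha₂]
  rw [key, hv1, hv2, hrest, ih a₂, keya, ← mul_assoc, frieze_pair]
  set D := !![(lam : K), 0; 0, 1]
  set Dinv := !![(lam : K)⁻¹, 0; 0, 1]
  set P := friezeProd a₂
  set My := friezeMat (a (Fin.last (2 * m + 1)))
  set Mx := friezeMat ((a ∘ Fin.castSucc) (Fin.last (2 * m)))
  calc Dinv * (My * Mx) * D * (Dinv * P * D)
      = Dinv * (My * Mx) * (D * Dinv) * P * D := by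
        simp only [mul_assoc]
    _ = Dinv * (My * (Mx * P)) * D := by
        rw [frieze_DDinv lam]
        simp only [mul_one, mul_assoc]

lemma frieze_conj {K : Type*} [Field K] (lam : Kˣ) :
    ∀ (m : ℕ) (a : Fin (2 * m) → K),
      friezeProd (fun j => (if (j : ℕ) % 2 = 0 then (lam : K) else (lam : K)⁻¹) * a j) =
        !![(lam : K)⁻¹, 0; 0, 1] * friezeProd a * !![(lam : K), 0; 0, 1] := by
  intro m
  induction m with
  | zero =>
      intro a
      have h1 : friezeProd (fun j => (if (j : ℕ) % 2 = 0 then (lam : K) else (lam : K)⁻¹) * a j)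
          = 1 := by simp [friezeProd]
      have h2 : friezeProd a = 1 := by simp [friezeProd]
      rw [h1, h2, mul_one, frieze_DinvD lam]
  | succ m ih =>
      intro a
      exact frieze_conj_step lam m ih a

/-- If `n` is even and `(a₁,…,aₙ)` satisfies the frieze condition `M(aₙ)⋯M(a₁) = -Id`,
then so does the rescaled tuple `(λa₁, λ⁻¹a₂, …, λa_{n-1}, λ⁻¹aₙ)` for every `λ ∈ Kˣ`.
(Here `a₁` corresponds to index `0`, so odd-numbered entries have even `Fin`-index.) -/
theorem friezeProd_rescale {K : Type*} [Field K] {n : ℕ} (hn : Even n) (a : Fin n → K)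
    (h : friezeProd a = -1) (lam : Kˣ) :
    friezeProd (fun j => (if (j : ℕ) % 2 = 0 then (lam : K) else (lam : K)⁻¹) * a j) = -1 := by
  obtain ⟨m, rfl⟩ : ∃ m, n = 2 * m := by
    obtain ⟨k, hk⟩ := hn; exact ⟨k, by omega⟩
  rw [frieze_conj lam m a, h, mul_neg, neg_mul, mul_one, ← neg_mul, neg_mul,
    frieze_DinvD lam]
end

section
/- Let q be a prime power and n = 2m even with m ≥ 2. Define C_n^± as the set of tuples (v_1,...,v_{2m}) ∈ C_{2m} (cyclically adjacent points distinct in P^1(F_q)) such that the cross-ratio-type product ((v_1-v_2)(v_3-v_4)···(v_{2m-1}-v_{2m})) / ((v_2-v_3)(v_4-v_5)···(v_{2m}-v_1)) equals -(±1). Then the cardinalities satisfy |C_n^+| = |C_{n-1}| + q·|C_{n-2}^-| and |C_n^-| = |C_{n-1}| + q·|C_{n-2}^+| for all even n ≥ 4. -/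
open Finset
open scoped LinearAlgebra.Projectivization

/-- Cyclic configurations of `n` points of `ℙ¹(K)` with cyclically adjacent points distinct. -/
def cycConfig (K : Type*) [Field K] (n : ℕ) : Set (Fin n → ℙ K (Fin 2 → K)) :=
  {v | ∀ i, v i ≠ v (cycSucc i)}

/-- The determinant of two vectors of `K²`. -/
def det2 {K : Type*} [Field K] (V W : Fin 2 → K) : K := V 0 * W 1 - V 1 * W 0

/-- The set `C_{2m}^ε` of cyclic configurations `(v₁,…,v_{2m})` of points of `ℙ¹(K)`
(adjacent points distinct) whose alternating product
`((v₁-v₂)(v₃-v₄)⋯(v_{2m-1}-v_{2m})) / ((v₂-v₃)⋯(v_{2m}-v₁))` equals `ε`.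
In terms of lifts `Vᵢ` with `dᵢ = det(Vᵢ, Vᵢ₊₁)` (cyclically) the condition reads
`∏_{i odd} dᵢ = ε · ∏_{i even} dᵢ`; this is independent of the choice of lifts, so we
use the canonical representatives. Under 0-indexing, the paper's odd positions are the
`Fin`-indices with even value. The set `C^+` of the paper is `signedConfig K m (-1)`,
and `C^-` is `signedConfig K m 1` (the defining product is `-(±1)`). -/
def signedConfig (K : Type*) [Field K] (m : ℕ) (ε : K) :
    Set (Fin (2 * m) → ℙ K (Fin 2 → K)) :=
  {v | (∀ i, v i ≠ v (cycSucc i)) ∧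
    ∏ i ∈ univ.filter (fun i : Fin (2 * m) => (i : ℕ) % 2 = 0),
        det2 ((v i).rep) ((v (cycSucc i)).rep)
      = ε * ∏ i ∈ univ.filter (fun i : Fin (2 * m) => (i : ℕ) % 2 = 1),
        det2 ((v i).rep) ((v (cycSucc i)).rep)}

set_option maxHeartbeats 1000000

namespace SC
variable {K : Type*} [Field K]

lemma det2_swap (V W : Fin 2 → K) : det2 V W = - det2 W V := by simp [det2]; ring

lemma vec_ne_zero_iff {V : Fin 2 → K} : V ≠ 0 ↔ V 0 ≠ 0 ∨ V 1 ≠ 0 := by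
  constructor
  · intro h
    by_contra hc
    push_neg at hc
    exact h (by funext i; fin_cases i <;> simp [hc.1, hc.2])
  · rintro (h | h) h0 <;> simp [h0] at h

lemma det2_eq_zero_iff {V W : Fin 2 → K} (hV : V ≠ 0) (hW : W ≠ 0) :
    det2 V W = 0 ↔ Projectivization.mk K V hV = Projectivization.mk K W hW := by
  rw [Projectivization.mk_eq_mk_iff]
  constructor
  · intro h
    have hVW : V 0 * W 1 = V 1 * W 0 := by
      have h' := h; simp only [det2, sub_eq_zero] at h'; exact h'
    rcases vec_ne_zero_iff.1 hW with h0 | h1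
    · have hv0 : V 0 ≠ 0 := by
        intro hv
        simp only [det2, hv, zero_mul, zero_sub, neg_eq_zero, mul_eq_zero] at h
        rcases h with h | h
        · exact hV (by funext i; fin_cases i <;> simp [hv, h])
        · exact h0 h
      refine ⟨Units.mk0 (V 0 / W 0) (div_ne_zero hv0 h0), ?_⟩
      funext i
      fin_cases i
      · simp [Units.smul_def, div_mul_cancel₀, h0]
      · show V 0 / W 0 * W 1 = V 1
        field_simp
        linear_combination hVW
    · have hv1 : V 1 ≠ 0 := by
        intro hv
        simp only [det2, hv, zero_mul, sub_zero, mul_eq_zero] at h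
        rcases h with h | h
        · exact hV (by funext i; fin_cases i <;> simp [hv, h])
        · exact h1 h
      refine ⟨Units.mk0 (V 1 / W 1) (div_ne_zero hv1 h1), ?_⟩
      funext i
      fin_cases i
      · show V 1 / W 1 * W 0 = V 0
        field_simp
        linear_combination -hVW
      · simp [Units.smul_def, div_mul_cancel₀, h1]
  · rintro ⟨a, ha⟩
    rw [← ha]
    simp [det2, Units.smul_def]
    ring

lemma det2_rep_eq_zero_iff {x y : ℙ K (Fin 2 → K)} : det2 x.rep y.rep = 0 ↔ x = y := by
  rw [det2_eq_zero_iff x.rep_nonzero y.rep_nonzero, Projectivization.mk_rep,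
    Projectivization.mk_rep]

lemma det2_rep_ne_zero {x y : ℙ K (Fin 2 → K)} (h : x ≠ y) : det2 x.rep y.rep ≠ 0 :=
  fun h0 => h (det2_rep_eq_zero_iff.1 h0)

lemma mk_eq_iff (W : Fin 2 → K) (hW : W ≠ 0) (x : ℙ K (Fin 2 → K)) :
    Projectivization.mk K W hW = x ↔ det2 W x.rep = 0 := by
  conv_lhs => rw [← Projectivization.mk_rep x]
  exact (det2_eq_zero_iff hW x.rep_nonzero).symm

lemma exists_rep_smul (V : Fin 2 → K) (hV : V ≠ 0) :
    ∃ c : K, c ≠ 0 ∧ (Projectivization.mk K V hV).rep = c • V := by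
  have h := Projectivization.mk_rep (Projectivization.mk K V hV)
  rw [Projectivization.mk_eq_mk_iff] at h
  obtain ⟨a, ha⟩ := h
  exact ⟨(a : K), a.ne_zero, ha.symm⟩


lemma det2_zero_right (V : Fin 2 → K) : det2 V 0 = 0 := by simp [det2]
lemma det2_zero_left (V : Fin 2 → K) : det2 0 V = 0 := by simp [det2]

open scoped Classical in
/-- A canonical vector independent from a nonzero `V`. -/
noncomputable def compl2 (V : Fin 2 → K) : Fin 2 → K := if V 0 = 0 then ![1, 0] else ![0, 1]

lemma det2_compl2 {V : Fin 2 → K} (hV : V ≠ 0) : det2 V (compl2 V) ≠ 0 := by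
  unfold compl2
  classical
  split_ifs with h
  · have h1 : V 1 ≠ 0 := by rcases vec_ne_zero_iff.1 hV with h' | h'; exact absurd h h'; exact h'
    simp [det2, h, h1]
  · simp [det2, h]

noncomputable def chartVec (x : ℙ K (Fin 2 → K)) (t : K) : Fin 2 → K := t • x.rep + compl2 x.rep

lemma det2_rep_chartVec (x : ℙ K (Fin 2 → K)) (t : K) :
    det2 x.rep (chartVec x t) = det2 x.rep (compl2 x.rep) := by
  simp [chartVec, det2]; ring

lemma chartVec_ne_zero (x : ℙ K (Fin 2 → K)) (t : K) : chartVec x t ≠ 0 := by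
  intro h
  have := det2_rep_chartVec x t
  rw [h, det2_zero_right] at this
  exact det2_compl2 x.rep_nonzero this.symm

noncomputable def chart (x : ℙ K (Fin 2 → K)) (t : K) : ℙ K (Fin 2 → K) :=
  Projectivization.mk K (chartVec x t) (chartVec_ne_zero x t)

lemma chart_ne (x : ℙ K (Fin 2 → K)) (t : K) : chart x t ≠ x := by
  intro h
  have h0 : det2 (chartVec x t) x.rep = 0 := (mk_eq_iff _ _ _).1 h
  rw [det2_swap] at h0
  rw [det2_rep_chartVec] at h0
  exact det2_compl2 x.rep_nonzero (by linear_combination -h0)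

lemma chart_injective (x : ℙ K (Fin 2 → K)) : Function.Injective (chart x) := by
  intro t t' h
  have h0 : det2 (chartVec x t) (chartVec x t') = 0 := by
    rw [det2_eq_zero_iff (chartVec_ne_zero x t) (chartVec_ne_zero x t')]
    exact h
  have hexp : det2 (chartVec x t) (chartVec x t')
      = (t - t') * det2 x.rep (compl2 x.rep) := by
    simp [chartVec, det2]; ring
  rw [hexp, mul_eq_zero] at h0
  rcases h0 with h0 | h0
  · exact sub_eq_zero.1 h0
  · exact absurd h0 (det2_compl2 x.rep_nonzero)

noncomputable def invChart (x y : ℙ K (Fin 2 → K)) : K :=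
  det2 y.rep (compl2 x.rep) / det2 x.rep y.rep

lemma chart_invChart {x y : ℙ K (Fin 2 → K)} (h : y ≠ x) : chart x (invChart x y) = y := by
  have hc : det2 x.rep y.rep ≠ 0 := det2_rep_ne_zero (Ne.symm h)
  rw [chart, mk_eq_iff]
  have : det2 (chartVec x (invChart x y)) y.rep
      = invChart x y * det2 x.rep y.rep + det2 (compl2 x.rep) y.rep := by
    simp [chartVec, det2]; ring
  rw [this, invChart, div_mul_cancel₀ _ hc]
  rw [det2_swap]
  ring

lemma invChart_chart (x : ℙ K (Fin 2 → K)) (t : K) : invChart x (chart x t) = t :=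
  chart_injective x (chart_invChart (chart_ne x t))


/-! ### Cyclic successor computations -/

lemma cycSucc_of_lt {n : ℕ} {i : Fin n} (h : i.1 + 1 < n) : cycSucc i = ⟨i.1 + 1, h⟩ :=
  Fin.ext (Nat.mod_eq_of_lt h)

lemma cycSucc_of_eq {n : ℕ} {i : Fin n} (h : i.1 + 1 = n) : cycSucc i = ⟨0, by omega⟩ := by
  apply Fin.ext
  show (i.1 + 1) % n = 0
  rw [h, Nat.mod_self]

/-! ### Basic product facts -/

noncomputable def dets {K : Type*} [Field K] {n : ℕ} (v : Fin n → ℙ K (Fin 2 → K))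
    (i : Fin n) : K :=
  det2 ((v i).rep) ((v (cycSucc i)).rep)

variable {K : Type*} [Field K]

noncomputable def Eprod {n : ℕ} (v : Fin n → ℙ K (Fin 2 → K)) : K :=
  ∏ i ∈ univ.filter (fun i : Fin n => (i : ℕ) % 2 = 0), dets v i

noncomputable def Oprod {n : ℕ} (v : Fin n → ℙ K (Fin 2 → K)) : K :=
  ∏ i ∈ univ.filter (fun i : Fin n => (i : ℕ) % 2 = 1), dets v i

lemma mem_signedConfig_iff {m : ℕ} (ε : K) (v : Fin (2 * m) → ℙ K (Fin 2 → K)) :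
    v ∈ signedConfig K m ε ↔ (∀ i, v i ≠ v (cycSucc i)) ∧ Eprod v = ε * Oprod v := Iff.rfl

lemma prod_dets_ne_zero {n : ℕ} {v : Fin n → ℙ K (Fin 2 → K)} {s : Finset (Fin n)}
    (h : ∀ i ∈ s, v i ≠ v (cycSucc i)) : ∏ i ∈ s, dets v i ≠ 0 :=
  Finset.prod_ne_zero_iff.2 fun i hi => det2_rep_ne_zero (h i hi)

/-! ### Restrictions and extensions -/

variable {k : ℕ}

def res1 (v : Fin (2*k+4) → ℙ K (Fin 2 → K)) : Fin (2*k+3) → ℙ K (Fin 2 → K) :=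
  fun i => v ⟨i.1, by omega⟩

def res2 (v : Fin (2*k+4) → ℙ K (Fin 2 → K)) : Fin (2*k+2) → ℙ K (Fin 2 → K) :=
  fun i => v ⟨i.1, by omega⟩

def ext1 (u : Fin (2*k+3) → ℙ K (Fin 2 → K)) (x : ℙ K (Fin 2 → K)) :
    Fin (2*k+4) → ℙ K (Fin 2 → K) :=
  fun i => if h : i.1 < 2*k+3 then u ⟨i.1, h⟩ else x

def ext2 (w : Fin (2*k+2) → ℙ K (Fin 2 → K)) (x : ℙ K (Fin 2 → K)) :
    Fin (2*k+4) → ℙ K (Fin 2 → K) :=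
  fun i => if h : i.1 < 2*k+2 then w ⟨i.1, h⟩ else if i.1 = 2*k+2 then w ⟨0, by omega⟩ else x

lemma ext1_apply_lt (u : Fin (2*k+3) → ℙ K (Fin 2 → K)) (x) (i : Fin (2*k+4))
    (h : i.1 < 2*k+3) : ext1 u x i = u ⟨i.1, h⟩ := dif_pos h

lemma ext1_apply_ge (u : Fin (2*k+3) → ℙ K (Fin 2 → K)) (x) (i : Fin (2*k+4))
    (h : ¬ i.1 < 2*k+3) : ext1 u x i = x := dif_neg h

lemma ext2_apply_lt (w : Fin (2*k+2) → ℙ K (Fin 2 → K)) (x) (i : Fin (2*k+4))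
    (h : i.1 < 2*k+2) : ext2 w x i = w ⟨i.1, h⟩ := dif_pos h

lemma ext2_apply_pen (w : Fin (2*k+2) → ℙ K (Fin 2 → K)) (x) (i : Fin (2*k+4))
    (h : i.1 = 2*k+2) : ext2 w x i = w ⟨0, by omega⟩ := by
  show dite _ _ _ = _
  rw [dif_neg (by omega), if_pos h]

lemma ext2_apply_last (w : Fin (2*k+2) → ℙ K (Fin 2 → K)) (x) (i : Fin (2*k+4))
    (h : i.1 = 2*k+3) : ext2 w x i = x := by
  show dite _ _ _ = _
  rw [dif_neg (by omega), if_neg (by omega)]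

lemma res1_ext1 (u : Fin (2*k+3) → ℙ K (Fin 2 → K)) (x) : res1 (ext1 u x) = u := by
  funext i
  show ext1 u x ⟨i.1, by omega⟩ = u i
  rw [ext1_apply_lt u x _ (by exact i.2)]

lemma res2_ext2 (w : Fin (2*k+2) → ℙ K (Fin 2 → K)) (x) : res2 (ext2 w x) = w := by
  funext i
  show ext2 w x ⟨i.1, by omega⟩ = w i
  rw [ext2_apply_lt w x _ (by exact i.2)]

lemma ext1_res1 (v : Fin (2*k+4) → ℙ K (Fin 2 → K)) :
    ext1 (res1 v) (v ⟨2*k+3, by omega⟩) = v := by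
  funext i
  by_cases h : i.1 < 2*k+3
  · rw [ext1_apply_lt _ _ _ h]
    exact congrArg v (Fin.eta i i.2)
  · rw [ext1_apply_ge _ _ _ h]
    have e : i = (⟨2*k+3, by omega⟩ : Fin (2*k+4)) := Fin.ext (by show i.1 = 2*k+3; omega)
    rw [e]

lemma ext2_res2 {v : Fin (2*k+4) → ℙ K (Fin 2 → K)}
    (h : v ⟨2*k+2, by omega⟩ = v ⟨0, by omega⟩) :
    ext2 (res2 v) (v ⟨2*k+3, by omega⟩) = v := by
  funext i
  by_cases h1 : i.1 < 2*k+2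
  · rw [ext2_apply_lt _ _ _ h1]
    exact congrArg v (Fin.eta i i.2)
  · by_cases h2 : i.1 = 2*k+2
    · rw [ext2_apply_pen _ _ _ h2]
      have e : i = (⟨2*k+2, by omega⟩ : Fin (2*k+4)) := Fin.ext (by show i.1 = 2*k+2; omega)
      rw [e, h]
      rfl
    · rw [ext2_apply_last _ _ _ (by omega)]
      have e : i = (⟨2*k+3, by omega⟩ : Fin (2*k+4)) := Fin.ext (by show i.1 = 2*k+3; omega)
      rw [e]

/-! ### Product splitting -/

noncomputable def Aprod (v : Fin (2*k+4) → ℙ K (Fin 2 → K)) : K :=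
  ∏ i ∈ univ.filter (fun i : Fin (2*k+4) => (i : ℕ) % 2 = 0 ∧ (i : ℕ) < 2*k+2), dets v i

noncomputable def Bprod (v : Fin (2*k+4) → ℙ K (Fin 2 → K)) : K :=
  ∏ i ∈ univ.filter (fun i : Fin (2*k+4) => (i : ℕ) % 2 = 1 ∧ (i : ℕ) < 2*k+3), dets v i

lemma Eprod_split (v : Fin (2*k+4) → ℙ K (Fin 2 → K)) :
    Eprod v = Aprod v * dets v ⟨2*k+2, by omega⟩ := by
  have hset : (univ.filter (fun i : Fin (2*k+4) => (i : ℕ) % 2 = 0))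
      = insert ⟨2*k+2, by omega⟩
        (univ.filter (fun i : Fin (2*k+4) => (i : ℕ) % 2 = 0 ∧ (i : ℕ) < 2*k+2)) := by
    ext i
    have hi := i.2
    simp only [Finset.mem_filter, Finset.mem_univ, true_and, Finset.mem_insert, Fin.ext_iff]
    omega
  have hnotmem : (⟨2*k+2, by omega⟩ : Fin (2*k+4)) ∉
      univ.filter (fun i : Fin (2*k+4) => (i : ℕ) % 2 = 0 ∧ (i : ℕ) < 2*k+2) := by
    intro hmem
    have h2 : (2*k+2) % 2 = 0 ∧ 2*k+2 < 2*k+2 := (Finset.mem_filter.1 hmem).2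
    omega
  rw [Eprod, hset, Finset.prod_insert hnotmem, mul_comm]
  rfl

lemma Oprod_split (v : Fin (2*k+4) → ℙ K (Fin 2 → K)) :
    Oprod v = Bprod v * dets v ⟨2*k+3, by omega⟩ := by
  have hset : (univ.filter (fun i : Fin (2*k+4) => (i : ℕ) % 2 = 1))
      = insert ⟨2*k+3, by omega⟩
        (univ.filter (fun i : Fin (2*k+4) => (i : ℕ) % 2 = 1 ∧ (i : ℕ) < 2*k+3)) := by
    ext i
    have hi := i.2
    simp only [Finset.mem_filter, Finset.mem_univ, true_and, Finset.mem_insert, Fin.ext_iff]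
    omega
  have hnotmem : (⟨2*k+3, by omega⟩ : Fin (2*k+4)) ∉
      univ.filter (fun i : Fin (2*k+4) => (i : ℕ) % 2 = 1 ∧ (i : ℕ) < 2*k+3) := by
    intro hmem
    have h2 : (2*k+3) % 2 = 1 ∧ 2*k+3 < 2*k+3 := (Finset.mem_filter.1 hmem).2
    omega
  rw [Oprod, hset, Finset.prod_insert hnotmem, mul_comm]
  rfl

lemma Aprod_congr {v v' : Fin (2*k+4) → ℙ K (Fin 2 → K)}
    (h : ∀ i : Fin (2*k+4), i.1 < 2*k+3 → v i = v' i) : Aprod v = Aprod v' := by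
  refine Finset.prod_congr rfl ?_
  intro i hi
  simp only [Finset.mem_filter, Finset.mem_univ, true_and] at hi
  have hcs : (cycSucc i).1 = i.1 + 1 := Nat.mod_eq_of_lt (by omega)
  rw [dets, dets, h i (by omega), h (cycSucc i) (by omega)]

lemma Bprod_congr {v v' : Fin (2*k+4) → ℙ K (Fin 2 → K)}
    (h : ∀ i : Fin (2*k+4), i.1 < 2*k+3 → v i = v' i) : Bprod v = Bprod v' := by
  refine Finset.prod_congr rfl ?_
  intro i hi
  simp only [Finset.mem_filter, Finset.mem_univ, true_and] at hi
  have hcs : (cycSucc i).1 = i.1 + 1 := Nat.mod_eq_of_lt (by omega)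
  rw [dets, dets, h i (by omega), h (cycSucc i) (by omega)]

noncomputable def A1 (u : Fin (2*k+3) → ℙ K (Fin 2 → K)) : K :=
  Aprod (ext1 u (u ⟨0, by omega⟩))

noncomputable def B1 (u : Fin (2*k+3) → ℙ K (Fin 2 → K)) : K :=
  Bprod (ext1 u (u ⟨0, by omega⟩))

lemma Aprod_ext1 (u : Fin (2*k+3) → ℙ K (Fin 2 → K)) (x) : Aprod (ext1 u x) = A1 u :=
  Aprod_congr fun i hi => by rw [ext1_apply_lt _ _ _ hi, ext1_apply_lt _ _ _ hi]

lemma Bprod_ext1 (u : Fin (2*k+3) → ℙ K (Fin 2 → K)) (x) : Bprod (ext1 u x) = B1 u :=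
  Bprod_congr fun i hi => by rw [ext1_apply_lt _ _ _ hi, ext1_apply_lt _ _ _ hi]

lemma ext1_adj (u : Fin (2*k+3) → ℙ K (Fin 2 → K)) (hu : ∀ j, u j ≠ u (cycSucc j)) (x)
    (i : Fin (2*k+4)) (h : i.1 + 1 < 2*k+3) : ext1 u x i ≠ ext1 u x (cycSucc i) := by
  rw [cycSucc_of_lt (by omega), ext1_apply_lt _ _ _ (by omega),
    ext1_apply_lt _ _ _ (show i.1 + 1 < 2*k+3 by omega)]
  have h2 := hu ⟨i.1, by omega⟩
  rwa [cycSucc_of_lt (n := 2*k+3) (i := ⟨i.1, by omega⟩) (show i.1 + 1 < 2*k+3 by omega)] at h2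

lemma A1_ne_zero {u : Fin (2*k+3) → ℙ K (Fin 2 → K)} (hu : ∀ j, u j ≠ u (cycSucc j)) :
    A1 u ≠ 0 := by
  simp only [A1, Aprod]
  refine prod_dets_ne_zero ?_
  intro i hi
  simp only [Finset.mem_filter, Finset.mem_univ, true_and] at hi
  exact ext1_adj u hu _ i (by omega)

lemma B1_ne_zero {u : Fin (2*k+3) → ℙ K (Fin 2 → K)} (hu : ∀ j, u j ≠ u (cycSucc j)) :
    B1 u ≠ 0 := by
  simp only [B1, Bprod]
  refine prod_dets_ne_zero ?_
  intro i hi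
  simp only [Finset.mem_filter, Finset.mem_univ, true_and] at hi
  exact ext1_adj u hu _ i (by omega)

lemma Eprod_ext1 (u : Fin (2*k+3) → ℙ K (Fin 2 → K)) (x) :
    Eprod (ext1 u x) = A1 u * det2 (u ⟨2*k+2, by omega⟩).rep x.rep := by
  rw [Eprod_split, Aprod_ext1]
  congr 1
  rw [dets, cycSucc_of_lt (show 2*k+2+1 < 2*k+4 by omega),
    ext1_apply_lt _ _ _ (show 2*k+2 < 2*k+3 by omega),
    ext1_apply_ge _ _ _ (show ¬ 2*k+2+1 < 2*k+3 by omega)]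

lemma Oprod_ext1 (u : Fin (2*k+3) → ℙ K (Fin 2 → K)) (x) :
    Oprod (ext1 u x) = B1 u * det2 x.rep (u ⟨0, by omega⟩).rep := by
  rw [Oprod_split, Bprod_ext1]
  congr 1
  rw [dets, cycSucc_of_eq (show 2*k+3+1 = 2*k+4 by omega),
    ext1_apply_ge _ _ _ (show ¬ 2*k+3 < 2*k+3 by omega),
    ext1_apply_lt _ _ _ (show 0 < 2*k+3 by omega)]

/-! ### Products for `ext2` -/

lemma Aprod_ext2 (w : Fin (2*k+2) → ℙ K (Fin 2 → K)) (x) : Aprod (ext2 w x) = Eprod w := by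
  rw [Aprod, Eprod]
  refine Finset.prod_bij (fun i _ => (⟨i.1 % (2*k+2), Nat.mod_lt _ (by omega)⟩ : Fin (2*k+2)))
    ?_ ?_ ?_ ?_
  · intro i hi
    simp only [Finset.mem_filter, Finset.mem_univ, true_and] at hi
    simp only [Finset.mem_filter, Finset.mem_univ, true_and]
    show i.1 % (2*k+2) % 2 = 0
    rw [Nat.mod_eq_of_lt (show i.1 < 2*k+2 by omega)]
    exact hi.1
  · intro a ha b hb hab
    simp only [Finset.mem_filter, Finset.mem_univ, true_and] at ha hb
    apply Fin.ext
    have h2 : a.1 % (2*k+2) = b.1 % (2*k+2) := congrArg Fin.val hab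
    rwa [Nat.mod_eq_of_lt (show a.1 < 2*k+2 by omega),
      Nat.mod_eq_of_lt (show b.1 < 2*k+2 by omega)] at h2
  · intro j hj
    simp only [Finset.mem_filter, Finset.mem_univ, true_and] at hj
    have hjlt := j.2
    refine ⟨⟨j.1, by omega⟩, ?_, ?_⟩
    · simp only [Finset.mem_filter, Finset.mem_univ, true_and]
      exact ⟨hj, hjlt⟩
    · apply Fin.ext
      show j.1 % (2*k+2) = j.1
      exact Nat.mod_eq_of_lt hjlt
  · intro i hi
    simp only [Finset.mem_filter, Finset.mem_univ, true_and] at hi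
    have e : (⟨i.1 % (2*k+2), Nat.mod_lt _ (by omega)⟩ : Fin (2*k+2)) = ⟨i.1, by omega⟩ :=
      Fin.ext (Nat.mod_eq_of_lt (by omega))
    rw [e, dets, dets, cycSucc_of_lt (show i.1 + 1 < 2*k+4 by omega),
      cycSucc_of_lt (n := 2*k+2) (i := ⟨i.1, by omega⟩) (show i.1 + 1 < 2*k+2 by omega),
      ext2_apply_lt _ _ _ (show i.1 < 2*k+2 by omega),
      ext2_apply_lt _ _ _ (show i.1 + 1 < 2*k+2 by omega)]

lemma Bprod_ext2 (w : Fin (2*k+2) → ℙ K (Fin 2 → K)) (x) : Bprod (ext2 w x) = Oprod w := by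
  rw [Bprod, Oprod]
  refine Finset.prod_bij (fun i _ => (⟨i.1 % (2*k+2), Nat.mod_lt _ (by omega)⟩ : Fin (2*k+2)))
    ?_ ?_ ?_ ?_
  · intro i hi
    simp only [Finset.mem_filter, Finset.mem_univ, true_and] at hi
    simp only [Finset.mem_filter, Finset.mem_univ, true_and]
    show i.1 % (2*k+2) % 2 = 1
    rw [Nat.mod_eq_of_lt (show i.1 < 2*k+2 by omega)]
    exact hi.1
  · intro a ha b hb hab
    simp only [Finset.mem_filter, Finset.mem_univ, true_and] at ha hb
    apply Fin.ext
    have h2 : a.1 % (2*k+2) = b.1 % (2*k+2) := congrArg Fin.val hab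
    rwa [Nat.mod_eq_of_lt (show a.1 < 2*k+2 by omega),
      Nat.mod_eq_of_lt (show b.1 < 2*k+2 by omega)] at h2
  · intro j hj
    simp only [Finset.mem_filter, Finset.mem_univ, true_and] at hj
    have hjlt := j.2
    refine ⟨⟨j.1, by omega⟩, ?_, ?_⟩
    · simp only [Finset.mem_filter, Finset.mem_univ, true_and]
      exact ⟨hj, by omega⟩
    · apply Fin.ext
      show j.1 % (2*k+2) = j.1
      exact Nat.mod_eq_of_lt hjlt
  · intro i hi
    simp only [Finset.mem_filter, Finset.mem_univ, true_and] at hi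
    by_cases h : i.1 + 1 < 2*k+2
    · have e : (⟨i.1 % (2*k+2), Nat.mod_lt _ (by omega)⟩ : Fin (2*k+2)) = ⟨i.1, by omega⟩ :=
        Fin.ext (Nat.mod_eq_of_lt (by omega))
      rw [e]
      rw [dets]
      rw [dets]
      rw [cycSucc_of_lt (show i.1 + 1 < 2*k+4 by omega)]
      rw [cycSucc_of_lt (n := 2*k+2) (i := ⟨i.1, by omega⟩) (show i.1 + 1 < 2*k+2 by omega)]
      rw [ext2_apply_lt _ _ _ (show i.1 < 2*k+2 by omega)]
      rw [ext2_apply_lt _ _ _ (show i.1 + 1 < 2*k+2 by omega)]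
    · have hi1 : i.1 = 2*k+1 := by omega
      have e : (⟨i.1 % (2*k+2), Nat.mod_lt _ (by omega)⟩ : Fin (2*k+2)) = ⟨i.1, by omega⟩ :=
        Fin.ext (Nat.mod_eq_of_lt (by omega))
      rw [e]
      rw [dets]
      rw [dets]
      rw [cycSucc_of_lt (show i.1 + 1 < 2*k+4 by omega)]
      rw [cycSucc_of_eq (n := 2*k+2) (i := ⟨i.1, by omega⟩) (show i.1 + 1 = 2*k+2 by omega)]
      have hv1 : ext2 w x i = w ⟨i.1, by omega⟩ := ext2_apply_lt w x i (by omega)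
      have hv2 : ext2 w x ⟨i.1+1, by omega⟩ = w ⟨0, by omega⟩ :=
        ext2_apply_pen w x ⟨i.1+1, by omega⟩ (show i.1 + 1 = 2*k+2 by omega)
      exact congrArg₂ (fun a b => det2 a.rep b.rep) hv1 hv2

lemma Eprod_ext2 (w : Fin (2*k+2) → ℙ K (Fin 2 → K)) (x) :
    Eprod (ext2 w x) = Eprod w * det2 (w ⟨0, by omega⟩).rep x.rep := by
  rw [Eprod_split, Aprod_ext2]
  congr 1
  rw [dets, cycSucc_of_lt (show 2*k+2+1 < 2*k+4 by omega),
    ext2_apply_pen _ _ _ (show 2*k+2 = 2*k+2 from rfl),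
    ext2_apply_last _ _ _ (show 2*k+2+1 = 2*k+3 by omega)]

lemma Oprod_ext2 (w : Fin (2*k+2) → ℙ K (Fin 2 → K)) (x) :
    Oprod (ext2 w x) = Oprod w * det2 x.rep (w ⟨0, by omega⟩).rep := by
  rw [Oprod_split, Bprod_ext2]
  congr 1
  rw [dets, cycSucc_of_eq (show 2*k+3+1 = 2*k+4 by omega),
    ext2_apply_last _ _ _ (show 2*k+3 = 2*k+3 from rfl),
    ext2_apply_lt _ _ _ (show 0 < 2*k+2 by omega)]

/-! ### Case `v(2k+2) ≠ v(0)`: the unique extension point -/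

lemma det2_self (V : Fin 2 → K) : det2 V V = 0 := by simp [det2]; ring

lemma det2_smul_right (V W : Fin 2 → K) (c : K) : det2 V (c • W) = c * det2 V W := by
  simp [det2]; ring

lemma det2_smul_left (V W : Fin 2 → K) (c : K) : det2 (c • V) W = c * det2 V W := by
  simp [det2]; ring

noncomputable def Wvec (ε : K) (u : Fin (2*k+3) → ℙ K (Fin 2 → K)) : Fin 2 → K :=
  A1 u • (u ⟨2*k+2, by omega⟩).rep + (ε * B1 u) • (u ⟨0, by omega⟩).rep

lemma det2_pen_Wvec (ε : K) (u : Fin (2*k+3) → ℙ K (Fin 2 → K)) :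
    det2 (u ⟨2*k+2, by omega⟩).rep (Wvec ε u)
      = ε * B1 u * det2 (u ⟨2*k+2, by omega⟩).rep (u ⟨0, by omega⟩).rep := by
  simp [Wvec, det2]; ring

lemma det2_Wvec_zero (ε : K) (u : Fin (2*k+3) → ℙ K (Fin 2 → K)) :
    det2 (Wvec ε u) (u ⟨0, by omega⟩).rep
      = A1 u * det2 (u ⟨2*k+2, by omega⟩).rep (u ⟨0, by omega⟩).rep := by
  simp [Wvec, det2]; ring

lemma det2_Wvec_X (ε : K) (u : Fin (2*k+3) → ℙ K (Fin 2 → K)) (X : Fin 2 → K) :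
    det2 (Wvec ε u) X = A1 u * det2 (u ⟨2*k+2, by omega⟩).rep X
      + (ε * B1 u) * det2 (u ⟨0, by omega⟩).rep X := by
  simp [Wvec, det2]; ring

lemma uD_ne_zero {u : Fin (2*k+3) → ℙ K (Fin 2 → K)} (hu : u ∈ cycConfig K (2*k+3)) :
    det2 (u ⟨2*k+2, by omega⟩).rep (u ⟨0, by omega⟩).rep ≠ 0 := by
  have h2 := hu ⟨2*k+2, by omega⟩
  rw [cycSucc_of_eq (show 2*k+2+1 = 2*k+3 by omega)] at h2
  exact det2_rep_ne_zero h2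

lemma Wvec_ne_zero {ε : K} {u : Fin (2*k+3) → ℙ K (Fin 2 → K)}
    (hu : u ∈ cycConfig K (2*k+3)) : Wvec ε u ≠ 0 := by
  intro h0
  have hz := det2_Wvec_zero ε u
  rw [h0, det2_zero_left] at hz
  exact mul_ne_zero (A1_ne_zero hu) (uD_ne_zero hu) hz.symm

lemma mem1 (ε : K) (hε : ε ≠ 0) (u : Fin (2*k+3) → ℙ K (Fin 2 → K))
    (hu : u ∈ cycConfig K (2*k+3)) (x : ℙ K (Fin 2 → K)) :
    ext1 u x ∈ signedConfig K (k+2) ε ↔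
      x = Projectivization.mk K (Wvec ε u) (Wvec_ne_zero hu) := by
  rw [mem_signedConfig_iff, Eprod_ext1, Oprod_ext1]
  constructor
  · rintro ⟨hadj, hprod⟩
    have hW : det2 (Wvec ε u) x.rep = 0 := by
      rw [det2_Wvec_X, det2_swap (u ⟨0, by omega⟩).rep x.rep]
      linear_combination hprod
    exact ((mk_eq_iff (Wvec ε u) (Wvec_ne_zero hu) x).2 hW).symm
  · intro hx
    obtain ⟨c, hc0, hc⟩ := exists_rep_smul (Wvec ε u) (Wvec_ne_zero hu)
    subst hx
    constructor
    · intro i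
      by_cases h1 : i.1 + 1 < 2*k+3
      · exact ext1_adj u hu _ i h1
      · by_cases h2 : i.1 = 2*k+2
        · have e : i = ⟨2*k+2, by omega⟩ := Fin.ext (by show i.1 = 2*k+2; omega)
          rw [e, cycSucc_of_lt (show 2*k+2+1 < 2*k+4 by omega),
            ext1_apply_lt _ _ _ (show 2*k+2 < 2*k+3 by omega),
            ext1_apply_ge _ _ _ (show ¬ 2*k+2+1 < 2*k+3 by omega)]
          intro hEq
          have hd : det2 (u ⟨2*k+2, by omega⟩).rep
              (Projectivization.mk K (Wvec ε u) (Wvec_ne_zero hu)).rep ≠ 0 := by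
            rw [hc, det2_smul_right, det2_pen_Wvec]
            exact mul_ne_zero hc0 (mul_ne_zero (mul_ne_zero hε (B1_ne_zero hu)) (uD_ne_zero hu))
          exact hd (det2_rep_eq_zero_iff.2 hEq)
        · have e : i = ⟨2*k+3, by omega⟩ := Fin.ext (by show i.1 = 2*k+3; omega)
          rw [e, cycSucc_of_eq (show 2*k+3+1 = 2*k+4 by omega),
            ext1_apply_ge _ _ _ (show ¬ 2*k+3 < 2*k+3 by omega),
            ext1_apply_lt _ _ _ (show 0 < 2*k+3 by omega)]
          intro hEq
          have hd : det2 (Projectivization.mk K (Wvec ε u) (Wvec_ne_zero hu)).rep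
              (u ⟨0, by omega⟩).rep ≠ 0 := by
            rw [hc, det2_smul_left, det2_Wvec_zero]
            exact mul_ne_zero hc0 (mul_ne_zero (A1_ne_zero hu) (uD_ne_zero hu))
          exact hd (det2_rep_eq_zero_iff.2 hEq)
    · rw [hc, det2_smul_right, det2_smul_left, det2_pen_Wvec, det2_Wvec_zero]
      ring

/-! ### Case `v(2k+2) = v(0)` -/

lemma ext2_adj_iff (w : Fin (2*k+2) → ℙ K (Fin 2 → K)) (x : ℙ K (Fin 2 → K)) :
    (∀ i, ext2 w x i ≠ ext2 w x (cycSucc i)) ↔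
      ((∀ j, w j ≠ w (cycSucc j)) ∧ x ≠ w ⟨0, by omega⟩) := by
  constructor
  · intro H
    refine ⟨?_, ?_⟩
    · intro j
      by_cases hj : j.1 + 1 < 2*k+2
      · have h2 := H ⟨j.1, by omega⟩
        rw [cycSucc_of_lt (n := 2*k+4) (i := ⟨j.1, by omega⟩) (show j.1+1 < 2*k+4 by omega),
          ext2_apply_lt _ _ _ (show j.1 < 2*k+2 by omega),
          ext2_apply_lt _ _ _ (show j.1+1 < 2*k+2 by omega)] at h2
        rw [cycSucc_of_lt hj]
        intro hEq
        apply h2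
        calc w ⟨j.1, by omega⟩ = w j := congrArg w (Fin.eta j j.2)
          _ = w ⟨j.1+1, hj⟩ := hEq
          _ = w ⟨j.1+1, by omega⟩ := rfl
      · have e : j = ⟨2*k+1, by omega⟩ := Fin.ext (by show j.1 = 2*k+1; omega)
        have h2 := H ⟨2*k+1, by omega⟩
        rw [cycSucc_of_lt (n := 2*k+4) (i := ⟨2*k+1, by omega⟩) (show 2*k+1+1 < 2*k+4 by omega),
          ext2_apply_lt _ _ _ (show 2*k+1 < 2*k+2 by omega),
          ext2_apply_pen _ _ _ (show 2*k+1+1 = 2*k+2 by omega)] at h2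
        rw [e, cycSucc_of_eq (show 2*k+1+1 = 2*k+2 by omega)]
        exact h2
    · have h2 := H ⟨2*k+3, by omega⟩
      rw [cycSucc_of_eq (n := 2*k+4) (i := ⟨2*k+3, by omega⟩) (show 2*k+3+1 = 2*k+4 by omega),
        ext2_apply_last _ _ _ rfl,
        ext2_apply_lt _ _ _ (show 0 < 2*k+2 by omega)] at h2
      exact h2
  · rintro ⟨hw, hx⟩ i
    by_cases h1 : i.1 + 1 < 2*k+2
    · rw [cycSucc_of_lt (show i.1+1 < 2*k+4 by omega),
        ext2_apply_lt _ _ _ (show i.1 < 2*k+2 by omega),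
        ext2_apply_lt _ _ _ (show i.1+1 < 2*k+2 by omega)]
      have h2 := hw ⟨i.1, by omega⟩
      rwa [cycSucc_of_lt (n := 2*k+2) (i := ⟨i.1, by omega⟩)
        (show i.1+1 < 2*k+2 by omega)] at h2
    · by_cases h2 : i.1 = 2*k+1
      · rw [cycSucc_of_lt (show i.1+1 < 2*k+4 by omega),
          ext2_apply_lt _ _ _ (show i.1 < 2*k+2 by omega),
          ext2_apply_pen _ _ _ (show i.1+1 = 2*k+2 by omega)]
        have h3 := hw ⟨2*k+1, by omega⟩
        rw [cycSucc_of_eq (show 2*k+1+1 = 2*k+2 by omega)] at h3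
        intro hEq
        apply h3
        calc w ⟨2*k+1, by omega⟩ = w ⟨i.1, by omega⟩ := congrArg w (Fin.ext (by show 2*k+1 = i.1; omega))
          _ = w ⟨0, by omega⟩ := hEq
      · by_cases h3 : i.1 = 2*k+2
        · rw [cycSucc_of_lt (show i.1+1 < 2*k+4 by omega),
            ext2_apply_pen _ _ _ h3,
            ext2_apply_last _ _ _ (show i.1+1 = 2*k+3 by omega)]
          exact fun hEq => hx hEq.symm
        · have h4 : i.1 = 2*k+3 := by omega
          rw [cycSucc_of_eq (by omega),
            ext2_apply_last _ _ _ h4,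
            ext2_apply_lt _ _ _ (show 0 < 2*k+2 by omega)]
          exact hx

lemma mem2 (ε : K) (w : Fin (2*k+2) → ℙ K (Fin 2 → K)) (x : ℙ K (Fin 2 → K)) :
    ext2 w x ∈ signedConfig K (k+2) ε ↔
      (w ∈ signedConfig K (k+1) (-ε) ∧ x ≠ w ⟨0, by omega⟩) := by
  rw [mem_signedConfig_iff, mem_signedConfig_iff, Eprod_ext2, Oprod_ext2]
  constructor
  · rintro ⟨hadjL, hprod⟩
    obtain ⟨hw, hx⟩ := (ext2_adj_iff w x).1 hadjL
    refine ⟨⟨hw, ?_⟩, hx⟩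
    have hd : det2 (w ⟨0, by omega⟩).rep x.rep ≠ 0 := det2_rep_ne_zero (Ne.symm hx)
    have hthis : Eprod w * det2 (w ⟨0, by omega⟩).rep x.rep
        = (-ε * Oprod w) * det2 (w ⟨0, by omega⟩).rep x.rep := by
      rw [det2_swap x.rep (w ⟨0, by omega⟩).rep] at hprod
      linear_combination hprod
    exact mul_right_cancel₀ hd hthis
  · rintro ⟨⟨hw, hprod⟩, hx⟩
    refine ⟨(ext2_adj_iff w x).2 ⟨hw, hx⟩, ?_⟩
    rw [det2_swap x.rep (w ⟨0, by omega⟩).rep]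
    linear_combination det2 (w ⟨0, by omega⟩).rep x.rep * hprod

/-! ### Restriction membership -/

lemma res1_mem {ε : K} {v : Fin (2*k+4) → ℙ K (Fin 2 → K)} (hv : v ∈ signedConfig K (k+2) ε)
    (h : v ⟨2*k+2, by omega⟩ ≠ v ⟨0, by omega⟩) : res1 v ∈ cycConfig K (2*k+3) := by
  intro j
  obtain ⟨hadj, -⟩ := hv
  by_cases hj : j.1 + 1 < 2*k+3
  · have h2 := hadj ⟨j.1, by omega⟩
    rw [cycSucc_of_lt (n := 2*k+4) (i := ⟨j.1, by omega⟩) (show j.1+1 < 2*k+4 by omega)] at h2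
    rw [cycSucc_of_lt hj]
    exact h2
  · have e : j = ⟨2*k+2, by omega⟩ := Fin.ext (by show j.1 = 2*k+2; omega)
    rw [e, cycSucc_of_eq (show 2*k+2+1 = 2*k+3 by omega)]
    exact h

lemma res2_mem {ε : K} {v : Fin (2*k+4) → ℙ K (Fin 2 → K)} (hv : v ∈ signedConfig K (k+2) ε)
    (h : v ⟨2*k+2, by omega⟩ = v ⟨0, by omega⟩) : res2 v ∈ signedConfig K (k+1) (-ε) := by
  have he := ext2_res2 h
  rw [← he] at hv
  exact ((mem2 ε _ _).1 hv).1

/-! ### The bijection -/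

open scoped Classical in
noncomputable def mainEquiv (k : ℕ) (ε : K) (hε : ε ≠ 0) :
    (signedConfig K (k+2) ε) ≃ ((cycConfig K (2*k+3)) ⊕ K × (signedConfig K (k+1) (-ε))) where
  toFun v :=
    if h : v.1 ⟨2*k+2, by omega⟩ = v.1 ⟨0, by omega⟩ then
      Sum.inr (invChart (v.1 ⟨0, by omega⟩) (v.1 ⟨2*k+3, by omega⟩), ⟨res2 v.1, res2_mem v.2 h⟩)
    else Sum.inl ⟨res1 v.1, res1_mem v.2 h⟩
  invFun s :=
    match s with
    | Sum.inl u => ⟨ext1 u.1 (Projectivization.mk K (Wvec ε u.1) (Wvec_ne_zero u.2)),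
        (mem1 ε hε u.1 u.2 _).2 rfl⟩
    | Sum.inr (t, w) => ⟨ext2 w.1 (chart (w.1 ⟨0, by omega⟩) t),
        (mem2 ε w.1 _).2 ⟨w.2, chart_ne _ t⟩⟩
  left_inv := by
    rintro ⟨v, hv⟩
    by_cases h : v ⟨2*k+2, by omega⟩ = v ⟨0, by omega⟩
    · simp only [dif_pos h]
      apply Subtype.ext
      show ext2 (res2 v)
        (chart (res2 v ⟨0, by omega⟩) (invChart (v ⟨0, by omega⟩) (v ⟨2*k+3, by omega⟩))) = v
      have h0 : res2 v ⟨0, by omega⟩ = v ⟨0, by omega⟩ := rfl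
      rw [h0]
      have hne : v ⟨2*k+3, by omega⟩ ≠ v ⟨0, by omega⟩ := by
        have h2 := hv.1 ⟨2*k+3, by omega⟩
        rwa [cycSucc_of_eq (show 2*k+3+1 = 2*k+4 by omega)] at h2
      rw [chart_invChart hne]
      exact ext2_res2 h
    · simp only [dif_neg h]
      apply Subtype.ext
      show ext1 (res1 v) (Projectivization.mk K _ _) = v
      have hv' : ext1 (res1 v) (v ⟨2*k+3, by omega⟩) ∈ signedConfig K (k+2) ε := by
        rw [ext1_res1]
        exact hv
      have hx := (mem1 ε hε (res1 v) (res1_mem hv h) _).1 hv'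
      rw [← hx]
      exact ext1_res1 v
  right_inv := by
    rintro (⟨u, hu⟩ | ⟨t, w, hw⟩)
    · have hne : ext1 u (Projectivization.mk K (Wvec ε u) (Wvec_ne_zero hu)) ⟨2*k+2, by omega⟩
          ≠ ext1 u (Projectivization.mk K (Wvec ε u) (Wvec_ne_zero hu)) ⟨0, by omega⟩ := by
        rw [ext1_apply_lt _ _ _ (show 2*k+2 < 2*k+3 by omega),
          ext1_apply_lt _ _ _ (show 0 < 2*k+3 by omega)]
        have h2 := hu ⟨2*k+2, by omega⟩
        rwa [cycSucc_of_eq (show 2*k+2+1 = 2*k+3 by omega)] at h2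
      simp only [dif_neg hne]
      exact congrArg Sum.inl (Subtype.ext (res1_ext1 u _))
    · have hp : ext2 w (chart (w ⟨0, by omega⟩) t) ⟨2*k+2, by omega⟩
          = ext2 w (chart (w ⟨0, by omega⟩) t) ⟨0, by omega⟩ := by
        rw [ext2_apply_pen _ _ _ rfl, ext2_apply_lt _ _ _ (show 0 < 2*k+2 by omega)]
      simp only [dif_pos hp]
      refine congrArg Sum.inr ?_
      have h0 : ext2 w (chart (w ⟨0, by omega⟩) t) ⟨0, by omega⟩ = w ⟨0, by omega⟩ :=
        ext2_apply_lt _ _ _ (show 0 < 2*k+2 by omega)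
      have hlast : ext2 w (chart (w ⟨0, by omega⟩) t) ⟨2*k+3, by omega⟩
          = chart (w ⟨0, by omega⟩) t := ext2_apply_last _ _ _ rfl
      refine Prod.ext ?_ (Subtype.ext (res2_ext2 w _))
      show invChart (ext2 w (chart (w ⟨0, by omega⟩) t) ⟨0, by omega⟩)
          (ext2 w (chart (w ⟨0, by omega⟩) t) ⟨2*k+3, by omega⟩) = t
      rw [h0, hlast, invChart_chart]

lemma key [Fintype K] (k : ℕ) (ε : K) (hε : ε ≠ 0) :
    Nat.card (signedConfig K (k+2) ε)
      = Nat.card (cycConfig K (2*k+3)) + Fintype.card K * Nat.card (signedConfig K (k+1) (-ε)) := by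
  haveI : Finite (ℙ K (Fin 2 → K)) := Quotient.finite _
  rw [Nat.card_congr (mainEquiv k ε hε), Nat.card_sum, Nat.card_prod, Nat.card_eq_fintype_card (α := K)]

end SC

theorem card_signedConfig_recurrence (K : Type*) [Field K] [Fintype K]
    (m : ℕ) (hm : 2 ≤ m) :
    Nat.card (signedConfig K m (-1)) =
        Nat.card (cycConfig K (2 * m - 1)) +
          Fintype.card K * Nat.card (signedConfig K (m - 1) 1) ∧
      Nat.card (signedConfig K m 1) =
        Nat.card (cycConfig K (2 * m - 1)) +
          Fintype.card K * Nat.card (signedConfig K (m - 1) (-1)) := by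
  obtain ⟨k, rfl⟩ : ∃ k, m = k + 2 := ⟨m - 2, by omega⟩
  constructor
  · have h := SC.key (K := K) k (-1) (neg_ne_zero.mpr one_ne_zero)
    rw [neg_neg] at h
    exact h
  · exact SC.key (K := K) k 1 one_ne_zero
end
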